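/- Let Γ be a finitely generated group that is virtually ℤ (i.e., contains ℤ as a subgroup of finite index) and let G be a Cayley graph of Γ with respect to a finite symmetric generating set. Let (G, c1) and (G, c2) be two connected networks with strictly positive conductance functions such that sup_{e∈E} c2(e) < ∞. Then almost surely, for every p ∈ [0,1) simultaneously, the disordered random network (G, c1, c2, p) is recurrent; in particular, for biased conductances there is no non-trivial recurrence/transience phase transition on G, i.e. p_c* = 1. -/

import Mathlib

open MeasureTheory ProbabilityTheory Filter
open scoped ENNReal Classical

noncomputable section

/-- The uniform distribution on `[0,1]`. -/
def unif01 : Measure ℝ := volume.restrict (Set.Icc 0 1)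

variable {V : Type*}

/-- The conductances of the disordered random network `(G, c1, c2, p)` determined by percolation
labels `lbl` (an edge `{x,y}` is `p`-open iff `lbl s(x,y) ≤ p`): open edges get conductance `c1`,
closed edges get `c2`. -/
def dCond (c1 c2 : V → V → ℝ) (lbl : Sym2 V → ℝ) (p : ℝ) : V → V → ℝ :=
  fun x y => if lbl s(x, y) ≤ p then c1 x y else c2 x y

/-- The biased conductance `C_λ(e) = λ^{-|e|}` on the graph `G` rooted at `o`, where
`|e| = min(dist(o,x), dist(o,y))` for an edge `e = {x,y}`; zero off edges. -/
def biasedCond (G : SimpleGraph V) (o : V) (lam : ℝ) : V → V → ℝ :=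
  fun x y => if G.Adj x y then lam ^ (-(min (G.dist o x) (G.dist o y) : ℤ)) else 0

/-- `θ` is a unit flow on the graph `G` from the vertex `a` to infinity: it is antisymmetric,
supported on edges, has zero divergence away from `a` and divergence `1` at `a`. -/
structure IsUnitFlowTo (G : SimpleGraph V) (θ : V → V → ℝ) (a : V) : Prop where
  antisymm : ∀ x y, θ x y = - θ y x
  support : ∀ x y, ¬ G.Adj x y → θ x y = 0
  div_zero : ∀ x, x ≠ a → ∑ᶠ y, θ x y = 0
  unit : ∑ᶠ y, θ a y = 1

/-- The energy `∑_e θ(e)² / c(e)` of the antisymmetric function `θ` with respect to the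
conductances `c` (valued in `ℝ≥0∞`; each undirected edge is counted twice, which does not affect
finiteness; a nonzero flow through a zero-conductance edge yields infinite energy). -/
def flowEnergy (c : V → V → ℝ) (θ : V → V → ℝ) : ℝ≥0∞ :=
  ∑' q : V × V, ENNReal.ofReal ((θ q.1 q.2) ^ 2) / ENNReal.ofReal (c q.1 q.2)

/-- The network `(G, c)` is transient at the vertex `a` if `a` admits a unit flow to infinity of
finite energy. -/
def TransientAt (G : SimpleGraph V) (c : V → V → ℝ) (a : V) : Prop :=
  ∃ θ : V → V → ℝ, IsUnitFlowTo G θ a ∧ flowEnergy c θ ≠ ⊤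

/-- The network `(G, c)` is transient: some vertex admits a unit flow to infinity of finite
energy. -/
def NetTransient (G : SimpleGraph V) (c : V → V → ℝ) : Prop :=
  ∃ a : V, TransientAt G c a

/-- The network `(G, c)` is recurrent: no vertex admits a unit flow to infinity of finite energy
(equivalently, every connected component of the subgraph spanned by positive-conductance edges is
recurrent). -/
def NetRecurrent (G : SimpleGraph V) (c : V → V → ℝ) : Prop :=
  ∀ a : V, ¬ TransientAt G c a

/-- The subgraph of `p`-open edges of `G` under percolation labels `lbl`. -/
def openSub (G : SimpleGraph V) (lbl : Sym2 V → ℝ) (p : ℝ) : SimpleGraph V where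
  Adj x y := G.Adj x y ∧ lbl s(x, y) ≤ p
  symm := by
    constructor
    intro x y h
    exact ⟨h.1.symm, by rw [Sym2.eq_swap]; exact h.2⟩
  loopless := ⟨fun x h => G.loopless.irrefl x h.1⟩

/-- There is an infinite open cluster in Bernoulli-`p` bond percolation on `G` with labels
`lbl`. -/
def HasInfCluster (G : SimpleGraph V) (lbl : Sym2 V → ℝ) (p : ℝ) : Prop :=
  ∃ x : V, {y : V | (openSub G lbl p).Reachable x y}.Infinite

/-- The family `U` of edge labels is an i.i.d. family of uniform-`[0,1]` random variables on the
probability space `(Ω, P)` (the grand coupling of Bernoulli bond percolation). -/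
def IsGrandCoupling {ι : Type*} {Ω : Type*} [MeasurableSpace Ω] (P : Measure Ω)
    (U : ι → Ω → ℝ) : Prop :=
  (∀ e, Measurable (U e)) ∧ iIndepFun U P ∧
    ∀ e, P.map (U e) = unif01

/-- The critical probability of Bernoulli bond percolation on `G`, realized through the grand
coupling `(P, U)`: the supremum of those `p ∈ [0,1]` for which almost surely there is no infinite
open cluster. -/
def percolationPc (G : SimpleGraph V) {Ω : Type*} [MeasurableSpace Ω] (P : Measure Ω)
    (U : Sym2 V → Ω → ℝ) : ℝ :=
  sSup {p : ℝ | p ∈ Set.Icc (0 : ℝ) 1 ∧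
    ∀ᵐ a ∂P, ¬ HasInfCluster G (fun e => U e a) p}

/-- The graph `G`, rooted at `o`, has (volume) growth rate `g`:
`|B_n(o)|^{1/n} → g` where `B_n(o)` is the ball of radius `n` around `o`. -/
def HasGrowthRate (G : SimpleGraph V) (o : V) (g : ℝ) : Prop :=
  Tendsto (fun n : ℕ => (({y : V | G.dist o y ≤ n}.ncard : ℝ)) ^ ((n : ℝ)⁻¹)) atTop (nhds g)

/-- `G` is quasi-transitive: its automorphism group has finitely many orbits on vertices. -/
def QuasiTransitive (G : SimpleGraph V) : Prop :=
  ∃ s : Finset V, ∀ x : V, ∃ y ∈ s, ∃ φ : G ≃g G, φ y = x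

/-!
A virtually cyclic group has linear volume growth, so infinitely many spheres about the identity
of its Cayley graph have boundedly many vertices, and the edges from such a sphere to the next
one form pairwise disjoint cutsets of bounded size `K`. A unit flow to infinity carries total flow
`1` through every such cutset beyond its source, so by Cauchy–Schwarz it spends energy at least
`1 / (K c)` on each cutset whose edges are all closed, where the conductance is `c2 ≤ c`
(Nash-Williams). For `p < r < 1` the events that disjoint cutsets are `r`-closed are independent,
each of probability at least `(1 - r) ^ K`, so by the second Borel–Cantelli lemma infinitely many
cutsets are `r`-closed almost surely; quantifying over rational `r` yields one null set that serves
every `p < 1`.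
-/

open Function

theorem Nat.frequently_le_two_mul_of_sum_range_le {f : ℕ → ℕ} {C : ℕ}
    (h : ∀ n, ∑ k ∈ Finset.range (n + 1), f k ≤ C * (n + 1)) : ∃ᶠ n in atTop, f n ≤ 2 * C := by
  rw [Filter.frequently_atTop]
  intro m
  by_contra! hbig
  -- `C * m + 1` consecutive terms above `2 * C` already exceed the bound at `n = m + C * m`.
  have hsum : (C * m + 1) * (2 * C + 1) ≤ ∑ k ∈ Finset.range (m + C * m + 1), f k := by
    rw [add_assoc, Finset.sum_range_add]
    calc (C * m + 1) * (2 * C + 1) = ∑ _k ∈ Finset.range (C * m + 1), (2 * C + 1) := by simp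
      _ ≤ ∑ k ∈ Finset.range (C * m + 1), f (m + k) :=
        Finset.sum_le_sum fun k _ => hbig (m + k) (Nat.le_add_right m k)
      _ ≤ _ := Nat.le_add_left _ _
  nlinarith [hsum.trans (h (m + C * m)), Nat.zero_le (C * C * m)]

namespace SimpleGraph

variable {G : SimpleGraph V} {o : V}

theorem Adj.dist_le_dist_add_one {x y : V} (h : G.Adj x y) : G.dist o y ≤ G.dist o x + 1 := by
  rcases h.diff_dist_adj (u := o) with h' | h' | h' <;> omega

theorem Walk.abs_sub_le_mul_length {f : V → ℤ} {M : ℕ} (hf : ∀ x y, G.Adj x y → |f y - f x| ≤ M)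
    {x y : V} (w : G.Walk x y) : |f y - f x| ≤ M * w.length := by
  induction w with
  | nil => simp
  | @cons x y z hxy w ih =>
    have := abs_sub_le (f z) (f y) (f x)
    have := hf x y hxy
    push_cast [Walk.length_cons]
    linarith

theorem ball_finite_and_ncard_le_of_lipschitz (hreach : ∀ x, G.Reachable o x) {f : V → ℤ} {M R : ℕ}
    (hf : ∀ x y, G.Adj x y → |f y - f x| ≤ M)
    (hfib : ∀ k, {x | f x = k}.Finite ∧ {x | f x = k}.ncard ≤ R) (n : ℕ) :
    {x | G.dist o x ≤ n}.Finite ∧ {x | G.dist o x ≤ n}.ncard ≤ R * (2 * M + 1) * (n + 1) := by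
  set I := Finset.Icc (f o - M * n) (f o + M * n)
  have hsub : {x | G.dist o x ≤ n} ⊆ ⋃ k ∈ I, {x | f x = k} := by
    intro x (hx : G.dist o x ≤ n)
    obtain ⟨w, hw⟩ := (hreach x).exists_walk_length_eq_dist
    have hfx := w.abs_sub_le_mul_length hf
    have : (M : ℤ) * w.length ≤ M * n := by rw [hw]; gcongr
    simp only [Set.mem_iUnion, Finset.mem_Icc, Set.mem_ofPred_eq, exists_prop, exists_eq_right', I]
    constructor <;> linarith [abs_le.1 hfx]
  have hfinU : (⋃ k ∈ I, {x | f x = k}).Finite := I.finite_toSet.biUnion fun k _ => (hfib k).1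
  refine ⟨hfinU.subset hsub, ?_⟩
  have hI : I.card = 2 * (M * n) + 1 := by
    rw [Int.card_Icc]
    omega
  calc {x | G.dist o x ≤ n}.ncard ≤ (⋃ k ∈ I, {x | f x = k}).ncard := Set.ncard_le_ncard hsub hfinU
    _ ≤ ∑ k ∈ I, {x | f x = k}.ncard := I.set_ncard_biUnion_le _
    _ ≤ ∑ _k ∈ I, R := Finset.sum_le_sum fun k _ => (hfib k).2
    _ ≤ R * (2 * M + 1) * (n + 1) := by
      rw [Finset.sum_const, smul_eq_mul, hI]
      nlinarith [Nat.zero_le (R * M * n), Nat.zero_le (R * n), Nat.zero_le M]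

theorem sum_ncard_sphere_eq_ncard_ball (hfin : ∀ n, {x | G.dist o x ≤ n}.Finite) (n : ℕ) :
    ∑ k ∈ Finset.range (n + 1), {x | G.dist o x = k}.ncard = {x | G.dist o x ≤ n}.ncard := by
  induction n with
  | zero => simp
  | succ n ih =>
    have hunion : {x | G.dist o x ≤ n + 1} = {x | G.dist o x ≤ n} ∪ {x | G.dist o x = n + 1} := by
      ext x
      simp only [Set.mem_ofPred_eq, Set.mem_union]
      omega
    have hdisj : Disjoint {x | G.dist o x ≤ n} {x | G.dist o x = n + 1} :=
      Set.disjoint_left.2 fun x hx hx' => by simp_all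
    rw [Finset.sum_range_succ, ih, hunion, Set.ncard_union_eq hdisj (hfin n)
      ((hfin (n + 1)).subset fun x hx => le_of_eq hx)]

def sphereEdges (G : SimpleGraph V) (o : V) (n : ℕ) : Set (V × V) :=
  {q | G.Adj q.1 q.2 ∧ G.dist o q.1 = n ∧ G.dist o q.2 = n + 1}

theorem finite_sphereEdges {n : ℕ} (hfin : {x | G.dist o x ≤ n + 1}.Finite) :
    (G.sphereEdges o n).Finite :=
  (hfin.prod hfin).subset fun _ hq => ⟨by simp [hq.2.1], by simp [hq.2.2]⟩

theorem ncard_sphereEdges_le {d : ℕ} (hdeg : ∀ x, (G.neighborSet x).ncard ≤ d) {n : ℕ}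
    (hfin : {x | G.dist o x ≤ n + 1}.Finite) :
    (G.sphereEdges o n).ncard ≤ {x | G.dist o x = n}.ncard * d := by
  have hsph : {x | G.dist o x = n}.Finite := hfin.subset fun x hx => by simp_all
  have hU : (⋃ x ∈ hsph.toFinset, Prod.mk x '' G.neighborSet x).Finite :=
    hsph.toFinset.finite_toSet.biUnion fun x hx => Set.Finite.image _ <| hfin.subset fun y hy =>
      (Adj.dist_le_dist_add_one hy).trans (by simp_all)
  have hsub : G.sphereEdges o n ⊆ ⋃ x ∈ hsph.toFinset, Prod.mk x '' G.neighborSet x := by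
    rintro ⟨x, y⟩ ⟨hxy, hx, -⟩
    simp only [Set.mem_iUnion, Set.mem_image]
    exact ⟨x, by simpa using hx, y, hxy, rfl⟩
  calc (G.sphereEdges o n).ncard
      ≤ (⋃ x ∈ hsph.toFinset, Prod.mk x '' G.neighborSet x).ncard :=
        Set.ncard_le_ncard hsub hU
    _ ≤ ∑ x ∈ hsph.toFinset, (Prod.mk x '' G.neighborSet x).ncard :=
        hsph.toFinset.set_ncard_biUnion_le _
    _ ≤ ∑ _x ∈ hsph.toFinset, d := Finset.sum_le_sum fun x _ => by
        rw [Set.ncard_image_of_injective _ (Prod.mk_right_injective x)]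
        exact hdeg x
    _ = {x | G.dist o x = n}.ncard * d := by
        rw [Finset.sum_const, smul_eq_mul, Set.ncard_eq_toFinset_card _ hsph]

theorem disjoint_image_mk_sphereEdges {m n : ℕ} (hmn : m ≠ n) :
    Disjoint (uncurry Sym2.mk '' G.sphereEdges o m) (uncurry Sym2.mk '' G.sphereEdges o n) := by
  refine Set.disjoint_left.2 ?_
  rintro _ ⟨⟨x, y⟩, ⟨-, hx, hy⟩, rfl⟩ ⟨⟨x', y'⟩, ⟨-, hx', hy'⟩, h⟩
  rcases Sym2.eq_iff.1 h with ⟨rfl, rfl⟩ | ⟨rfl, rfl⟩ <;> simp_all; omega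

end SimpleGraph

theorem Finset.sum_sum_eq_zero_of_antisymm {α : Type*} {f : α → α → ℝ}
    (hf : ∀ x y, f x y = -f y x) (s : Finset α) : ∑ x ∈ s, ∑ y ∈ s, f x y = 0 := by
  have : ∑ x ∈ s, ∑ y ∈ s, f x y = -∑ x ∈ s, ∑ y ∈ s, f x y := by
    conv_lhs => rw [Finset.sum_comm]
    simp only [← Finset.sum_neg_distrib]
    exact Finset.sum_congr rfl fun x _ => Finset.sum_congr rfl fun y _ => hf y x
  linarith

theorem IsUnitFlowTo.sum_sphereEdges_eq_one {G : SimpleGraph V} {θ : V → V → ℝ} {v o : V}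
    (hθ : IsUnitFlowTo G θ v) {n : ℕ} (hv : G.dist o v ≤ n)
    (hfin : {x | G.dist o x ≤ n + 1}.Finite) :
    ∑ q ∈ (SimpleGraph.finite_sphereEdges hfin).toFinset, θ q.1 q.2 = 1 := by
  set B := (hfin.subset (t := {x | G.dist o x ≤ n}) fun _ hx => Nat.le_succ_of_le hx).toFinset
  set B' := hfin.toFinset
  have hB : ∀ x, x ∈ B ↔ G.dist o x ≤ n := fun x => Set.Finite.mem_toFinset _
  have hB' : ∀ x, x ∈ B' ↔ G.dist o x ≤ n + 1 := fun x => Set.Finite.mem_toFinset _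
  have hadj : ∀ x y, θ x y ≠ 0 → G.Adj x y := fun x y h =>
    by_contra fun hxy => h (hθ.support x y hxy)
  have hout : ∑ x ∈ B, ∑ y ∈ B', θ x y = 1 := by
    calc ∑ x ∈ B, ∑ y ∈ B', θ x y = ∑ x ∈ B, ∑ᶠ y, θ x y :=
          Finset.sum_congr rfl fun x hx => (finsum_eq_sum_of_support_subset _ ?_).symm
      _ = 1 := by
        rw [Finset.sum_eq_single_of_mem v ((hB v).2 hv) fun x _ hxv => hθ.div_zero x hxv]
        exact hθ.unit
    intro y hy
    simp only [Finset.mem_coe, hB'] at hy ⊢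
    have := (hadj x y hy).dist_le_dist_add_one (o := o)
    have := (hB x).1 hx
    omega
  have hsub : (SimpleGraph.finite_sphereEdges hfin).toFinset ⊆ B ×ˢ (B' \ B) := by
    intro q hq
    obtain ⟨-, h1, h2⟩ := (Set.Finite.mem_toFinset _).1 hq
    simp only [Finset.mem_product, Finset.mem_sdiff, hB, hB']
    omega
  have hzero : ∀ q ∈ B ×ˢ (B' \ B), q ∉ (SimpleGraph.finite_sphereEdges hfin).toFinset →
      θ q.1 q.2 = 0 := by
    intro q hq hqD
    by_contra hq0
    have h := (hadj _ _ hq0).dist_le_dist_add_one (o := o)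
    simp only [Finset.mem_product, Finset.mem_sdiff, hB, hB'] at hq
    exact hqD ((Set.Finite.mem_toFinset _).2 ⟨hadj _ _ hq0, by omega, by omega⟩)
  calc ∑ q ∈ (SimpleGraph.finite_sphereEdges hfin).toFinset, θ q.1 q.2
      = ∑ x ∈ B, ∑ y ∈ B' \ B, θ x y := by
        rw [Finset.sum_subset hsub hzero, Finset.sum_product]
    _ = 1 := by
        have hBB' : B ⊆ B' := fun x hx => (hB' x).2 (Nat.le_succ_of_le ((hB x).1 hx))
        simp only [Finset.sum_sdiff_eq_sub hBB', Finset.sum_sub_distrib, hout,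
          Finset.sum_sum_eq_zero_of_antisymm hθ.antisymm, sub_zero]

/-- The cutsets are the edges between consecutive spheres, taken at the infinitely many radii
where the sphere has at most `2 * C` vertices. -/
theorem SimpleGraph.exists_flow_cutsets {G : SimpleGraph V} {o : V} {C d : ℕ}
    (hball : ∀ n, {x | G.dist o x ≤ n}.Finite ∧ {x | G.dist o x ≤ n}.ncard ≤ C * (n + 1))
    (hdeg : ∀ x, (G.neighborSet x).ncard ≤ d) :
    ∃ (K : ℕ) (D : ℕ → Finset (V × V)),
      Pairwise (Disjoint on fun k => (D k).image (uncurry Sym2.mk)) ∧ (∀ k, (D k).card ≤ K) ∧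
      ∀ v θ, IsUnitFlowTo G θ v → ∀ᶠ k in atTop, ∑ q ∈ D k, θ q.1 q.2 = 1 := by
  have hsph : ∃ᶠ n in atTop, {x | G.dist o x = n}.ncard ≤ 2 * C :=
    Nat.frequently_le_two_mul_of_sum_range_le fun n =>
      (sum_ncard_sphere_eq_ncard_ball (fun n => (hball n).1) n).trans_le (hball n).2
  obtain ⟨φ, hφ, hφC⟩ := extraction_of_frequently_atTop hsph
  refine ⟨2 * C * d, fun k => (finite_sphereEdges (hball (φ k + 1)).1).toFinset, ?_, ?_, ?_⟩
  · intro k l hkl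
    rw [onFun, ← Finset.disjoint_coe, Finset.coe_image, Finset.coe_image, Set.Finite.coe_toFinset,
      Set.Finite.coe_toFinset]
    exact disjoint_image_mk_sphereEdges (hφ.injective.ne hkl)
  · intro k
    rw [← Set.ncard_eq_toFinset_card _ (finite_sphereEdges (hball (φ k + 1)).1)]
    exact (ncard_sphereEdges_le hdeg (hball _).1).trans (Nat.mul_le_mul_right d (hφC k))
  · intro v θ hθ
    filter_upwards [hφ.tendsto_atTop.eventually_ge_atTop (G.dist o v)] with k hk
    exact hθ.sum_sphereEdges_eq_one hk (hball _).1

section Cayley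

variable {Γ : Type*} [Group Γ] {S : Finset Γ} {G : SimpleGraph Γ}

theorem reachable_one_of_closure_eq_top (hAdj : ∀ x y : Γ, G.Adj x y ↔ x⁻¹ * y ∈ S)
    (hgen : Subgroup.closure (S : Set Γ) = ⊤) (g : Γ) : G.Reachable 1 g := by
  have hmul : ∀ a {x y : Γ}, G.Reachable x y → G.Reachable (a * x) (a * y) := fun a x y h =>
    h.map ⟨(a * ·), fun {u v} huv => by rwa [hAdj, mul_inv_rev, mul_assoc, inv_mul_cancel_left,
      ← hAdj]⟩
  induction (hgen ▸ Subgroup.mem_top g : g ∈ Subgroup.closure (S : Set Γ))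
    using Subgroup.closure_induction with
  | mem x hx => exact ((hAdj 1 x).2 (by simpa using hx)).reachable
  | one => rfl
  | mul x y _ _ hx hy => exact hx.trans (by simpa using hmul x hy)
  | inv x _ hx => simpa using (hmul x⁻¹ hx).symm

/-- `f g` is the `ℤ`-coordinate of `z`, where `g = z t` with `z ∈ Z` and `t` in a finite right
transversal `T`; right multiplication by `s` changes `z` by an element `t s t'⁻¹` of the finite set
`T S T⁻¹`. -/
theorem exists_lipschitz_int_of_finiteIndex (Z : Subgroup Γ) [Z.FiniteIndex]
    (e : Z ≃* Multiplicative ℤ) (S : Finset Γ) :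
    ∃ (f : Γ → ℤ) (M R : ℕ), (∀ x, ∀ s ∈ S, |f (x * s) - f x| ≤ M) ∧
      ∀ k, {x | f x = k}.Finite ∧ {x | f x = k}.ncard ≤ R := by
  obtain ⟨T, hT, -⟩ := Z.exists_isComplement_right 1
  have hTfin : T.Finite := hT.finite_right
  set f : Γ → ℤ := fun g => Multiplicative.toAdd (e (hT.equiv g).1)
  have hf_sub : ∀ x y,
      f y - f x = Multiplicative.toAdd (e ((hT.equiv x).1⁻¹ * (hT.equiv y).1)) := by
    intro x y
    simp only [f, map_mul, map_inv, toAdd_mul, toAdd_inv]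
    ring
  have hcocycle : ∀ x s, (((hT.equiv x).1⁻¹ * (hT.equiv (x * s)).1 : Z) : Γ) =
      (hT.equiv x).2 * s * ((hT.equiv (x * s)).2 : Γ)⁻¹ := by
    intro x s
    push_cast [hT.equiv_fst_eq_mul_inv]
    group
  set W : Set Z :=
    Subtype.val ⁻¹' ((fun p : Γ × Γ × Γ => p.1 * p.2.1 * p.2.2⁻¹) '' (T ×ˢ (S : Set Γ) ×ˢ T))
  have hW : W.Finite :=
    ((hTfin.prod (S.finite_toSet.prod hTfin)).image _).preimage Subtype.val_injective.injOn
  obtain ⟨M, hM⟩ := (hW.image fun w => (Multiplicative.toAdd (e w)).natAbs).bddAbove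
  refine ⟨f, M, T.ncard, fun x s hs => ?_, fun k => ?_⟩
  · rw [hf_sub, Int.abs_eq_natAbs]
    exact_mod_cast hM ⟨_, ⟨((hT.equiv x).2, s, (hT.equiv (x * s)).2),
      ⟨(hT.equiv x).2.2, hs, (hT.equiv (x * s)).2.2⟩, (hcocycle x s).symm⟩, rfl⟩
  · have hsub : {x | f x = k} ⊆ (fun t => (e.symm (Multiplicative.ofAdd k) : Γ) * t) '' T := by
      rintro x (rfl : f x = k)
      exact ⟨(hT.equiv x).2, (hT.equiv x).2.2, by simpa [f] using hT.equiv_fst_mul_equiv_snd x⟩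
    exact ⟨(hTfin.image _).subset hsub,
      (Set.ncard_le_ncard hsub (hTfin.image _)).trans (Set.ncard_image_le hTfin)⟩

theorem exists_flow_cutsets_of_finiteIndex (Z : Subgroup Γ) [Z.FiniteIndex]
    (e : Z ≃* Multiplicative ℤ) (hAdj : ∀ x y : Γ, G.Adj x y ↔ x⁻¹ * y ∈ S)
    (hgen : Subgroup.closure (S : Set Γ) = ⊤) :
    ∃ (K : ℕ) (D : ℕ → Finset (Γ × Γ)),
      Pairwise (Disjoint on fun k => (D k).image (uncurry Sym2.mk)) ∧ (∀ k, (D k).card ≤ K) ∧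
      ∀ v θ, IsUnitFlowTo G θ v → ∀ᶠ k in atTop, ∑ q ∈ D k, θ q.1 q.2 = 1 := by
  obtain ⟨f, M, R, hf, hfib⟩ := exists_lipschitz_int_of_finiteIndex Z e S
  have hball := SimpleGraph.ball_finite_and_ncard_le_of_lipschitz
    (reachable_one_of_closure_eq_top hAdj hgen)
    (fun x y hxy => by simpa using hf x _ ((hAdj x y).1 hxy)) hfib
  have hdeg : ∀ x, (G.neighborSet x).ncard ≤ S.card := fun x =>
    calc (G.neighborSet x).ncard ≤ ((x * ·) '' (S : Set Γ)).ncard :=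
          Set.ncard_le_ncard (fun y hy => ⟨x⁻¹ * y, (hAdj x y).1 hy, mul_inv_cancel_left x y⟩)
            (S.finite_toSet.image _)
      _ ≤ S.card := (Set.ncard_image_le S.finite_toSet).trans (Set.ncard_coe_finset S).le
  exact SimpleGraph.exists_flow_cutsets hball hdeg

end Cayley

theorem ENNReal.tsum_eq_top_of_frequently_le_sum {α : Type*} {g : α → ℝ≥0∞}
    {D : ℕ → Finset α} (hD : Pairwise (Disjoint on D)) {δ : ℝ≥0∞} (hδ : δ ≠ 0)
    (h : ∃ᶠ n in atTop, δ ≤ ∑ q ∈ D n, g q) : ∑' q, g q = ⊤ := by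
  obtain ⟨φ, hφ, hle⟩ := extraction_of_frequently_atTop h
  have hinj : Injective fun p : Σ k, D (φ k) => (p.2 : α) := by
    rintro ⟨k, q, hq⟩ ⟨k', q', hq'⟩ (rfl : q = q')
    obtain rfl : k = k' := hφ.injective <|
      by_contra fun hne => Finset.disjoint_left.1 (hD hne) hq hq'
    rfl
  refine top_le_iff.1 ?_
  calc ⊤ = ∑' _ : ℕ, δ := (ENNReal.tsum_const_eq_top_of_ne_zero hδ).symm
    _ ≤ ∑' k, ∑ q ∈ D (φ k), g q := ENNReal.tsum_le_tsum hle
    _ = ∑' p : Σ k, D (φ k), g p.2 := by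
      rw [ENNReal.tsum_sigma']
      exact tsum_congr fun k => (Finset.tsum_subtype _ g).symm
    _ ≤ ∑' q, g q := ENNReal.tsum_comp_le_tsum_of_injective hinj g

theorem ENNReal.inv_mul_ofReal_le_sum_sq_div {α : Type*} {s : Finset α} {f g : α → ℝ}
    {K : ℕ} {c : ℝ} (hsum : ∑ i ∈ s, f i = 1) (hcard : s.card ≤ K) (hg : ∀ i ∈ s, g i ≤ c) :
    ((K : ℝ≥0∞) * ENNReal.ofReal c)⁻¹ ≤
      ∑ i ∈ s, ENNReal.ofReal (f i ^ 2) / ENNReal.ofReal (g i) := by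
  have hCS : (1 : ℝ) ≤ K * ∑ i ∈ s, f i ^ 2 := by
    have := sq_sum_le_card_mul_sum_sq (s := s) (f := f)
    rw [hsum, one_pow] at this
    exact this.trans (by gcongr)
  have hK : (K : ℝ≥0∞)⁻¹ ≤ ENNReal.ofReal (∑ i ∈ s, f i ^ 2) := by
    rw [ENNReal.inv_le_iff_le_mul (by simp) (by simp), ← ENNReal.ofReal_natCast,
      ← ENNReal.ofReal_mul (Nat.cast_nonneg K)]
    exact ENNReal.one_le_ofReal.2 hCS
  calc ((K : ℝ≥0∞) * ENNReal.ofReal c)⁻¹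
      = (K : ℝ≥0∞)⁻¹ * (ENNReal.ofReal c)⁻¹ :=
        ENNReal.mul_inv (Or.inr ENNReal.ofReal_ne_top) (Or.inl (ENNReal.natCast_ne_top K))
    _ ≤ ENNReal.ofReal (∑ i ∈ s, f i ^ 2) * (ENNReal.ofReal c)⁻¹ := by gcongr
    _ = ∑ i ∈ s, ENNReal.ofReal (f i ^ 2) / ENNReal.ofReal c := by
      rw [ENNReal.ofReal_sum_of_nonneg fun i _ => sq_nonneg _, Finset.sum_mul]
      rfl
    _ ≤ ∑ i ∈ s, ENNReal.ofReal (f i ^ 2) / ENNReal.ofReal (g i) :=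
      Finset.sum_le_sum fun i hi => ENNReal.div_le_div_left (ENNReal.ofReal_le_ofReal (hg i hi)) _

theorem netRecurrent_of_cutsets {G : SimpleGraph V} {cond : V → V → ℝ} {c : ℝ} {K : ℕ}
    {D : ℕ → Finset (V × V)} (hD : Pairwise (Disjoint on D)) (hcard : ∀ k, (D k).card ≤ K)
    (hflow : ∀ v θ, IsUnitFlowTo G θ v → ∀ᶠ k in atTop, ∑ q ∈ D k, θ q.1 q.2 = 1)
    (hcond : ∃ᶠ k in atTop, ∀ q ∈ D k, cond q.1 q.2 ≤ c) : NetRecurrent G cond := by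
  rintro v ⟨θ, hθ, hfin⟩
  have hδ : ((K : ℝ≥0∞) * ENNReal.ofReal c)⁻¹ ≠ 0 :=
    ENNReal.inv_ne_zero.2 (ENNReal.mul_ne_top (ENNReal.natCast_ne_top K) ENNReal.ofReal_ne_top)
  refine hfin (ENNReal.tsum_eq_top_of_frequently_le_sum hD hδ ?_)
  exact (hcond.and_eventually (hflow v θ hθ)).mono fun k hk =>
    ENNReal.inv_mul_ofReal_le_sum_sq_div hk.2 (hcard k) hk.1

section GrandCoupling

variable {ι Ω : Type*} [MeasurableSpace Ω] {P : Measure Ω} {U : ι → Ω → ℝ}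

theorem IsGrandCoupling.measure_preimage_Ioi (hU : IsGrandCoupling P U) (i : ι) {r : ℝ}
    (hr0 : 0 ≤ r) : P (U i ⁻¹' Set.Ioi r) = ENNReal.ofReal (1 - r) := by
  have hIoc : Set.Ioi r ∩ Set.Icc 0 1 = Set.Ioc r 1 := Set.ext fun x =>
    ⟨fun ⟨hrx, _, hx1⟩ => ⟨hrx, hx1⟩, fun ⟨hrx, hx1⟩ => ⟨hrx, hr0.trans hrx.le, hx1⟩⟩
  rw [← Measure.map_apply (hU.1 i) measurableSet_Ioi, hU.2.2 i, unif01,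
    Measure.restrict_apply measurableSet_Ioi, hIoc, Real.volume_Ioc]

/-- Disjoint blocks of i.i.d. labels give independent events, each of probability at least
`(1 - r) ^ K`, so the second Borel–Cantelli lemma applies. -/
theorem IsGrandCoupling.ae_frequently_forall_lt [IsProbabilityMeasure P]
    (hU : IsGrandCoupling P U) {E : ℕ → Finset ι} (hE : Pairwise (Disjoint on E)) {K : ℕ}
    (hK : ∀ k, (E k).card ≤ K) {r : ℝ} (hr0 : 0 ≤ r) (hr1 : r < 1) :
    ∀ᵐ ω ∂P, ∃ᶠ k in atTop, ∀ i ∈ E k, r < U i ω := by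
  set A : ℕ → Set Ω := fun k => ⋂ i ∈ E k, U i ⁻¹' Set.Ioi r
  have hAmeas : ∀ k, MeasurableSet (A k) := fun k =>
    Finset.measurableSet_biInter _ fun i _ => hU.1 i measurableSet_Ioi
  have hprod : ∀ s : Finset ι,
      P (⋂ i ∈ s, U i ⁻¹' Set.Ioi r) = ENNReal.ofReal (1 - r) ^ s.card := by
    intro s
    rw [hU.2.1.meas_biInter fun i _ => ⟨Set.Ioi r, measurableSet_Ioi, rfl⟩,
      Finset.prod_congr rfl fun i _ => hU.measure_preimage_Ioi i hr0, Finset.prod_const]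
  have hindep : iIndepSet A P := by
    refine (iIndepSet_iff_meas_biInter hAmeas).2 fun J => ?_
    have hJ : (J : Set ℕ).PairwiseDisjoint E := fun m _ n _ hmn => hE hmn
    simp only [A, ← Finset.set_biInter_biUnion, hprod, Finset.card_biUnion hJ,
      Finset.prod_pow_eq_pow_sum]
  have hsum : ∑' k, P (A k) = ⊤ := by
    have hδ : ENNReal.ofReal (1 - r) ^ K ≠ 0 := pow_ne_zero K (by simpa using hr1)
    refine top_le_iff.1 (calc ⊤ = ∑' _ : ℕ, ENNReal.ofReal (1 - r) ^ K :=
          (ENNReal.tsum_const_eq_top_of_ne_zero hδ).symm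
      _ ≤ ∑' k, P (A k) := ENNReal.tsum_le_tsum fun k => ?_)
    rw [hprod]
    exact pow_le_pow_of_le_one zero_le (ENNReal.ofReal_le_one.2 (by linarith)) (hK k)
  have hlimsup : limsup A atTop ∈ ae P := by
    rw [mem_ae_iff, prob_compl_eq_zero_iff (MeasurableSet.measurableSet_limsup hAmeas)]
    exact measure_limsup_eq_one hAmeas hindep hsum
  filter_upwards [hlimsup] with ω hω
  simpa [A, mem_limsup_iff_frequently_mem] using hω

end GrandCoupling

theorem statement_5_general
    {Γ : Type*} [Group Γ]
    (Z : Subgroup Γ) (hZ : Nonempty (Z ≃* Multiplicative ℤ)) (hZfin : Z.FiniteIndex)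
    (S : Finset Γ) (G : SimpleGraph Γ)
    (hAdj : ∀ x y : Γ, G.Adj x y ↔ x⁻¹ * y ∈ S)
    (hgen : Subgroup.closure (S : Set Γ) = ⊤)
    (c1 c2 : Γ → Γ → ℝ)
    (c : ℝ) (hc2bdd : ∀ x y, c2 x y ≤ c)
    {Ω : Type*} [MeasurableSpace Ω] (P : Measure Ω) [IsProbabilityMeasure P]
    (U : Sym2 Γ → Ω → ℝ) (hU : IsGrandCoupling P U) :
    (∀ᵐ a ∂P, ∀ p : ℝ, 0 ≤ p → p < 1 →
      NetRecurrent G (dCond c1 c2 (fun e => U e a) p)) ∧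
    sSup {p : ℝ | p ∈ Set.Icc (0 : ℝ) 1 ∧
        ∀ᵐ a ∂P, ∀ q : ℝ, 0 ≤ q → q < p →
          NetRecurrent G (dCond c1 c2 (fun e => U e a) q)} = 1 := by
  obtain ⟨e⟩ := hZ
  have := hZfin
  obtain ⟨K, D, hdisj, hcard, hflow⟩ := exists_flow_cutsets_of_finiteIndex Z e hAdj hgen
  have hclosed : ∀ᵐ ω ∂P, ∀ r : ℚ, 0 ≤ (r : ℝ) → (r : ℝ) < 1 →
      ∃ᶠ k in atTop, ∀ i ∈ (D k).image (uncurry Sym2.mk), (r : ℝ) < U i ω :=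
    ae_all_iff.2 fun r => by
      simp only [Filter.eventually_imp_distrib_left]
      exact fun hr0 hr1 => hU.ae_frequently_forall_lt hdisj
        (fun k => Finset.card_image_le.trans (hcard k)) hr0 hr1
  have hrec : ∀ᵐ ω ∂P, ∀ p : ℝ, 0 ≤ p → p < 1 →
      NetRecurrent G (dCond c1 c2 (fun e => U e ω) p) := by
    filter_upwards [hclosed] with ω hω p hp0 hp1
    obtain ⟨r, hpr, hr1⟩ := exists_rat_btwn hp1
    refine netRecurrent_of_cutsets (c := c) (fun k l hkl => (hdisj hkl).of_image_finset) hcard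
      hflow ((hω r (hp0.trans hpr.le) hr1).mono fun k hk q hq => ?_)
    have hq_closed : ¬ U s(q.1, q.2) ω ≤ p :=
      (hpr.trans (hk _ (Finset.mem_image_of_mem _ hq))).not_ge
    simpa only [dCond, if_neg hq_closed] using hc2bdd q.1 q.2
  have h1 : (1 : ℝ) ∈ {p : ℝ | p ∈ Set.Icc (0 : ℝ) 1 ∧
      ∀ᵐ a ∂P, ∀ q : ℝ, 0 ≤ q → q < p → NetRecurrent G (dCond c1 c2 (fun e => U e a) q)} :=
    ⟨⟨zero_le_one, le_rfl⟩, hrec⟩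
  exact ⟨hrec, le_antisymm (csSup_le ⟨1, h1⟩ fun p hp => hp.1.2)
    (le_csSup ⟨1, fun p hp => hp.1.2⟩ h1)⟩

/-- Let `Γ` be a finitely generated group which is virtually `ℤ` (it contains a
subgroup of finite index isomorphic to `ℤ`), and let `G` be a Cayley graph of `Γ` with respect to
a finite symmetric generating set `S` (so `x ~ y` iff `x⁻¹ * y ∈ S`). Let `(G, c1)` and `(G, c2)`
be two connected networks with strictly positive conductances on edges such that
`sup_e c2(e) < ∞`. Then almost surely, for every `p ∈ [0,1)` simultaneously, the disordered
random network `(G, c1, c2, p)` is recurrent; in particular there is no non-trivial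
recurrence/transience phase transition, i.e. `p_c* = 1`. -/
theorem statement_5
    {Γ : Type*} [Group Γ]
    (Z : Subgroup Γ) (hZ : Nonempty (Z ≃* Multiplicative ℤ)) (hZfin : Z.FiniteIndex)
    (S : Finset Γ) (G : SimpleGraph Γ)
    (hAdj : ∀ x y : Γ, G.Adj x y ↔ x⁻¹ * y ∈ S)
    (hgen : Subgroup.closure (S : Set Γ) = ⊤)
    (c1 c2 : Γ → Γ → ℝ)
    (hc1symm : ∀ x y, c1 x y = c1 y x)
    (hc1pos : ∀ x y, G.Adj x y → 0 < c1 x y)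
    (hc1supp : ∀ x y, ¬ G.Adj x y → c1 x y = 0)
    (hc2symm : ∀ x y, c2 x y = c2 y x)
    (hc2pos : ∀ x y, G.Adj x y → 0 < c2 x y)
    (hc2supp : ∀ x y, ¬ G.Adj x y → c2 x y = 0)
    (c : ℝ) (hc2bdd : ∀ x y, c2 x y ≤ c)
    {Ω : Type*} [MeasurableSpace Ω] (P : Measure Ω) [IsProbabilityMeasure P]
    (U : Sym2 Γ → Ω → ℝ) (hU : IsGrandCoupling P U) :
    (∀ᵐ a ∂P, ∀ p : ℝ, 0 ≤ p → p < 1 →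
      NetRecurrent G (dCond c1 c2 (fun e => U e a) p)) ∧
    sSup {p : ℝ | p ∈ Set.Icc (0 : ℝ) 1 ∧
        ∀ᵐ a ∂P, ∀ q : ℝ, 0 ≤ q → q < p →
          NetRecurrent G (dCond c1 c2 (fun e => U e a) q)} = 1 :=
  statement_5_general Z hZ hZfin S G hAdj hgen c1 c2 c hc2bdd P U hU
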